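/- Let K be a field, S = K[x_1,…,x_n], and let I ⊆ S be a complete intersection monomial ideal minimally generated by m monomials (a regular sequence of monomials, equivalently monomials with pairwise disjoint supports). Then sdepth(I) ≤ ⌈m/2⌉ + n − m. -/

import Mathlib

open MvPolynomial

/-- The Stanley space `u K[Z]`: the `K`-span of all monomials `x^(u+τ)` with
`supp τ ⊆ Z`. -/
noncomputable def StanleySpace (K : Type*) [Field K] {n : ℕ} (u : Fin n →₀ ℕ) (Z : Finset (Fin n)) :
    Submodule K (MvPolynomial (Fin n) K) :=
  Submodule.span K {p | ∃ τ : Fin n →₀ ℕ, (τ.support : Set (Fin n)) ⊆ Z ∧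
    p = monomial (u + τ) (1 : K)}

/-- A Stanley decomposition of a monomial ideal `I`: a finite family of Stanley spaces
`u_i K[Z_i]` with `u_i` a monomial of `I`, whose internal direct sum is `I`
(as a `K`-vector space). -/
structure StanleyDecomposition (K : Type*) [Field K] {n : ℕ}
    (I : Ideal (MvPolynomial (Fin n) K)) where
  r : ℕ
  rpos : 0 < r
  u : Fin r → (Fin n →₀ ℕ)
  Z : Fin r → Finset (Fin n)
  mem : ∀ i, monomial (u i) (1 : K) ∈ I
  isSup : Submodule.restrictScalars K I = ⨆ i, StanleySpace K (u i) (Z i)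
  indep : iSupIndep fun i => StanleySpace K (u i) (Z i)

/-- `sdepth 𝒟 = min_i |Z_i|`. -/
def StanleyDecomposition.sdepth {K : Type*} [Field K] {n : ℕ}
    {I : Ideal (MvPolynomial (Fin n) K)} (D : StanleyDecomposition K I) : ℕ :=
  Finset.univ.inf' ⟨⟨0, D.rpos⟩, Finset.mem_univ _⟩ fun i => (D.Z i).card

/-- The Stanley depth of a monomial ideal: the maximum of `sdepth 𝒟` over all
Stanley decompositions `𝒟` of `I`. -/
noncomputable def Ideal.sdepth (K : Type*) [Field K] {n : ℕ}
    (I : Ideal (MvPolynomial (Fin n) K)) : ℕ :=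
  sSup (Set.range fun D : StanleyDecomposition K I => D.sdepth)

/-!
Every generator `v_j` of the ideal lies in some Stanley space `u_i K[Z_i]` of a decomposition,
and since `u_i` is itself in the ideal, disjointness of supports forces `u_i = v_j`. Write
`Z_j` for the variables of that space. If `supp v_k ⊆ Z_j` and `supp v_j ⊆ Z_k` for some
`j ≠ k`, then `v_j + v_k` lies in two summands of a direct sum, which is absurd. So
"`supp v_k ⊆ Z_j`" is an antisymmetric relation on the `m` generators and some `j` relates to
at most `(m - 1) / 2` others. Each of the remaining `m - 1 - (m - 1) / 2` generators has a
variable outside `Z_j`, and these variables are distinct, so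
`|Z_j| ≤ n - (m - 1 - (m - 1) / 2) = ⌈m/2⌉ + n - m`.
-/

open Finset Function

section Combinatorics

variable {α ι : Type*} [Fintype α] [DecidableEq α]

theorem two_mul_sum_card_filter_le (R : α → α → Prop) [DecidableRel R]
    (hR : ∀ j k, j ≠ k → R j k → ¬ R k j) :
    2 * ∑ j, #{k ∈ univ.erase j | R j k} ≤ Fintype.card α * (Fintype.card α - 1) := by
  simp only [card_filter]
  have hswap : ∑ j, ∑ k ∈ univ.erase j, (if R j k then 1 else 0) =
      ∑ j, ∑ k ∈ univ.erase j, (if R k j then 1 else 0) :=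
    sum_comm' (fun j k => by simp [and_comm, eq_comm])
  calc 2 * ∑ j, ∑ k ∈ univ.erase j, (if R j k then 1 else 0)
      = ∑ j, ∑ k ∈ univ.erase j, ((if R j k then 1 else 0) + if R k j then 1 else 0) := by
        rw [two_mul]
        nth_rewrite 2 [hswap]
        simp only [sum_add_distrib]
    _ ≤ ∑ j : α, ∑ _k ∈ univ.erase j, 1 := by
        gcongr with j _ k hk
        split_ifs with hjk hkj
        · exact absurd hkj (hR j k (ne_of_mem_erase hk).symm hjk)
        all_goals simp
    _ = Fintype.card α * (Fintype.card α - 1) := by simp [card_erase_of_mem]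

theorem exists_card_filter_le_half [Nonempty α] (R : α → α → Prop) [DecidableRel R]
    (hR : ∀ j k, j ≠ k → R j k → ¬ R k j) :
    ∃ j, #{k ∈ univ.erase j | R j k} ≤ (Fintype.card α - 1) / 2 := by
  by_contra! h
  set N := Fintype.card α
  have hlow : N * ((N - 1) / 2 + 1) ≤ ∑ j, #{k ∈ univ.erase j | R j k} := by
    simpa using card_nsmul_le_sum univ _ _ fun j _ => Nat.succ_le_of_lt (h j)
  have hmul : N * (2 * ((N - 1) / 2 + 1)) ≤ N * (N - 1) :=
    calc N * (2 * ((N - 1) / 2 + 1)) = 2 * (N * ((N - 1) / 2 + 1)) := by ring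
      _ ≤ 2 * ∑ j, #{k ∈ univ.erase j | R j k} := by omega
      _ ≤ N * (N - 1) := two_mul_sum_card_filter_le R hR
  have := Nat.le_of_mul_le_mul_left hmul Fintype.card_pos
  omega

theorem card_add_card_le_of_not_subset {s : Finset ι} {f : ι → Finset α} {Z : Finset α}
    (hf : (s : Set ι).PairwiseDisjoint f) (hZ : ∀ k ∈ s, ¬ f k ⊆ Z) :
    #Z + #s ≤ Fintype.card α := by
  have hs : #s ≤ #(s.biUnion fun k => f k \ Z) :=
    card_le_card_biUnion (hf.mono_on fun _ _ => sdiff_le)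
      fun k hk => sdiff_nonempty.2 (hZ k hk)
  have hdisj : Disjoint Z (s.biUnion fun k => f k \ Z) := by
    simp [disjoint_biUnion_right, disjoint_sdiff]
  have := card_union_of_disjoint hdisj ▸ card_le_univ (Z ∪ s.biUnion fun k => f k \ Z)
  omega

theorem exists_card_le_of_not_mutually_subset [Fintype ι] [Nonempty ι] [DecidableEq ι]
    (s : ι → Finset α) (hs : Pairwise (Disjoint on s)) (Z : ι → Finset α)
    (hZ : ∀ j k, j ≠ k → s k ⊆ Z j → ¬ s j ⊆ Z k) :
    ∃ j, #(Z j) ≤ (Fintype.card ι + 1) / 2 + (Fintype.card α - Fintype.card ι) := by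
  obtain ⟨j, hj⟩ := exists_card_filter_le_half (fun j k => s k ⊆ Z j) hZ
  have hcover := card_add_card_le_of_not_subset (s := {k ∈ univ.erase j | ¬ s k ⊆ Z j})
    (hs.set_pairwise _) fun k hk => (mem_filter.1 hk).2
  have hsplit := card_filter_add_card_filter_not (s := univ.erase j) fun k => s k ⊆ Z j
  rw [card_erase_of_mem (mem_univ j), card_univ] at hsplit
  have : 0 < Fintype.card ι := Fintype.card_pos
  exact ⟨j, by omega⟩

end Combinatorics

theorem Finsupp.eq_of_le_of_pairwise_disjoint_support {ι σ : Type*} {v : ι → σ →₀ ℕ}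
    (hv : ∀ i, v i ≠ 0) (hdisj : Pairwise (Disjoint on fun i => (v i).support)) {i j : ι}
    (h : v i ≤ v j) : i = j := by
  by_contra hij
  exact hv i (support_eq_empty.mp ((hdisj hij).eq_bot_of_le (support_mono h)))

theorem MvPolynomial.monomial_one_mem_span_monomials_iff {σ ι R : Type*} [CommSemiring R]
    [Nontrivial R] (v : ι → σ →₀ ℕ) (a : σ →₀ ℕ) :
    monomial a (1 : R) ∈ Ideal.span (Set.range fun i => monomial (v i) (1 : R)) ↔
      ∃ i, v i ≤ a := by
  classical
  rw [Set.range_comp' (monomial · (1 : R)) v, mem_ideal_span_monomial_image,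
    support_monomial, if_neg one_ne_zero]
  simp

def stanleyExponents {n : ℕ} (u : Fin n →₀ ℕ) (Z : Finset (Fin n)) : Set (Fin n →₀ ℕ) :=
  {a | ∃ τ : Fin n →₀ ℕ, (τ.support : Set (Fin n)) ⊆ Z ∧ a = u + τ}

section Stanley

variable {K : Type*} [Field K] {n : ℕ}

theorem stanleySpace_eq_restrictSupport (u : Fin n →₀ ℕ) (Z : Finset (Fin n)) :
    StanleySpace K u Z = restrictSupport K (stanleyExponents u Z) := by
  rw [StanleySpace, restrictSupport_eq_span]
  congr 1
  ext p
  simp [stanleyExponents, eq_comm]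

theorem monomial_one_mem_stanleySpace_iff {u a : Fin n →₀ ℕ} {Z : Finset (Fin n)} :
    monomial a (1 : K) ∈ StanleySpace K u Z ↔ a ∈ stanleyExponents u Z := by
  classical
  rw [stanleySpace_eq_restrictSupport, mem_restrictSupport_iff, support_monomial,
    if_neg one_ne_zero]
  simp

namespace StanleyDecomposition

section

variable {I : Ideal (MvPolynomial (Fin n) K)} (D : StanleyDecomposition K I)

theorem exists_mem_stanleyExponents {a : Fin n →₀ ℕ} (ha : monomial a (1 : K) ∈ I) :
    ∃ i, a ∈ stanleyExponents (D.u i) (D.Z i) := by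
  classical
  have hle : (⨆ i, StanleySpace K (D.u i) (D.Z i)) ≤
      restrictSupport K (⋃ i, stanleyExponents (D.u i) (D.Z i)) :=
    iSup_le fun i => (stanleySpace_eq_restrictSupport _ _).le.trans
      (restrictSupport_mono _ (Set.subset_iUnion (fun i => stanleyExponents (D.u i) (D.Z i)) i))
  have hmem := hle (D.isSup ▸ (Submodule.restrictScalars_mem K I _).2 ha)
  rw [mem_restrictSupport_iff, support_monomial, if_neg one_ne_zero] at hmem
  simpa using hmem

theorem eq_of_mem_stanleyExponents {i j : Fin D.r} {a : Fin n →₀ ℕ}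
    (hi : a ∈ stanleyExponents (D.u i) (D.Z i)) (hj : a ∈ stanleyExponents (D.u j) (D.Z j)) :
    i = j := by
  by_contra hij
  have h0 := Submodule.disjoint_def.mp (D.indep.pairwiseDisjoint hij) _
    (monomial_one_mem_stanleySpace_iff.2 hi) (monomial_one_mem_stanleySpace_iff.2 hj)
  exact one_ne_zero (monomial_eq_zero.mp h0)

end

variable {m : ℕ} {v : Fin m → Fin n →₀ ℕ} (hv : ∀ i, v i ≠ 0)
  (hdisj : Pairwise (Disjoint on fun i => (v i).support))
  (D : StanleyDecomposition K (Ideal.span (Set.range fun i => monomial (v i) (1 : K))))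
include hv hdisj

theorem exists_u_eq_generator (j : Fin m) : ∃ i, D.u i = v j := by
  obtain ⟨i, τ, -, hτ⟩ := D.exists_mem_stanleyExponents
    ((monomial_one_mem_span_monomials_iff v _).2 ⟨j, le_rfl⟩)
  obtain ⟨l, hl⟩ := (monomial_one_mem_span_monomials_iff v _).1 (D.mem i)
  have hle : D.u i ≤ v j := hτ ▸ le_self_add
  obtain rfl := Finsupp.eq_of_le_of_pairwise_disjoint_support hv hdisj (hl.trans hle)
  exact ⟨i, le_antisymm hle hl⟩

theorem eq_of_support_subset_Z {i i' : Fin D.r} {j k : Fin m} (hi : D.u i = v j)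
    (hi' : D.u i' = v k) (hk : (v k).support ⊆ D.Z i) (hj : (v j).support ⊆ D.Z i') :
    j = k := by
  have hii' : i = i' := D.eq_of_mem_stanleyExponents (a := v j + v k)
    ⟨v k, coe_subset.2 hk, by rw [hi]⟩ ⟨v j, coe_subset.2 hj, by rw [hi', add_comm]⟩
  subst hii'
  exact Finsupp.eq_of_le_of_pairwise_disjoint_support hv hdisj (hi ▸ hi' ▸ le_rfl)

end StanleyDecomposition

end Stanley

theorem sdepth_ci_upper_bound_general (n : ℕ) (K : Type*) [Field K]
    (m : ℕ) (v : Fin m → (Fin n →₀ ℕ)) (hv : ∀ i, v i ≠ 0)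
    (hdisj : ∀ i j, i ≠ j → Disjoint (v i).support (v j).support) :
    Ideal.sdepth K (Ideal.span (Set.range fun i => monomial (v i) (1 : K))) ≤
      (m + 1) / 2 + (n - m) := by
  classical
  refine csSup_le' ?_
  rintro _ ⟨D, rfl⟩
  have hdisj' : Pairwise (Disjoint on fun i => (v i).support) := fun i j => hdisj i j
  choose ι hι using D.exists_u_eq_generator hv hdisj'
  have : Nonempty (Fin m) := by
    obtain ⟨l, -⟩ := (monomial_one_mem_span_monomials_iff v _).1 (D.mem ⟨0, D.rpos⟩)
    exact ⟨l⟩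
  obtain ⟨j, hj⟩ := exists_card_le_of_not_mutually_subset (fun j => (v j).support) hdisj'
    (fun j => D.Z (ι j)) fun j k hjk hk hj =>
      hjk (D.eq_of_support_subset_Z hv hdisj' (hι j) (hι k) hk hj)
  simp only [Fintype.card_fin] at hj
  exact (inf'_le _ (mem_univ (ι j))).trans hj

/-- If `I ⊆ K[x₁,…,xₙ]` is a complete intersection monomial ideal minimally generated
by `m` monomials (nonconstant monomials with pairwise disjoint supports), then
`sdepth I ≤ ⌈m/2⌉ + n - m`. -/
theorem sdepth_ci_upper_bound (n : ℕ) (K : Type*) [Field K]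
    (m : ℕ) (hm : 0 < m) (v : Fin m → (Fin n →₀ ℕ)) (hv : ∀ i, v i ≠ 0)
    (hdisj : ∀ i j, i ≠ j → Disjoint (v i).support (v j).support) :
    Ideal.sdepth K (Ideal.span (Set.range fun i => monomial (v i) (1 : K))) ≤
      (m + 1) / 2 + (n - m) :=
  sdepth_ci_upper_bound_general n K m v hv hdisj
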